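/- arXiv:2204.05223 — 4 statements merged into one kernel-verified Lean document; each statement's English description precedes it below -/
import Mathlib

section
/- Optimal greedy user selection (Lemma 1): in the large-bandwidth feasibility problem P5 (find S = ∪_{m=1}^D S_m with S_m ⊆ K_m, Σ_m |S_m| = n, and Σ_{d=1}^m f_d(n_d) ≤ τ̃_k for all k ∈ S_m), let F_1 = {k ∈ K_1 : f_1(n) ≤ τ̃_k} with |F_1| < n. If no solution exists with |S_1| = n† for some n† ≤ |F_1|, then no solution exists with 0 ≤ |S_1| < n†. -/
/-! Exchange argument: in a feasible selection with fewer than `|F₁|` users exiting at the first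
point, some user of `F₁` is left out and some selected user exits later. Swapping the two keeps
the selection size `n` and lowers no count `n_d` (the newcomer exits at the earliest point), so
every latency can only drop, while the newcomer meets its deadline because it belongs to `F₁`.
Repeating the swap raises `|S₁|` one at a time up to any `n† ≤ |F₁|`. -/

open Finset

namespace GreedyUserSelection

variable {ι : Type*} {dk : ι → ℕ} {f : ℕ → ℕ → ℝ}

variable (dk f) in
def latency (S : Finset ι) (k : ι) : ℝ :=
  ∑ d ∈ Icc 1 (dk k), f d (S.filter (fun j => d ≤ dk j)).card

variable (dk f) in
def IsFeasible (τ : ι → ℝ) (S : Finset ι) : Prop :=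
  ∀ k ∈ S, latency dk f S k ≤ τ k

theorem card_filter_insert_erase_le [DecidableEq ι] {S : Finset ι} {j k : ι} (hk : k ∈ S)
    (hjk : dk j ≤ dk k) (d : ℕ) :
    ((insert j (S.erase k)).filter (fun i => d ≤ dk i)).card ≤
      (S.filter (fun i => d ≤ dk i)).card := by
  rw [filter_insert, filter_erase]
  split_ifs with hd
  · calc _ ≤ ((S.filter (fun i => d ≤ dk i)).erase k).card + 1 := card_insert_le _ _
      _ = _ := card_erase_add_one (mem_filter.mpr ⟨hk, hd.trans hjk⟩)
  · exact card_le_card (erase_subset _ _)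

theorem latency_mono (hf : ∀ d, Monotone (f d)) {S T : Finset ι}
    (h : ∀ d, (T.filter (fun i => d ≤ dk i)).card ≤ (S.filter (fun i => d ≤ dk i)).card)
    (k : ι) : latency dk f T k ≤ latency dk f S k :=
  sum_le_sum fun d _ => hf d (h d)

theorem latency_of_eq_one {S : Finset ι} {k : ι} (hk : dk k = 1) :
    latency dk f S k = f 1 (S.filter (fun i => 1 ≤ dk i)).card := by
  simp [latency, hk]

theorem IsFeasible.insert_erase [DecidableEq ι] (hf : ∀ d, Monotone (f d)) {τ : ι → ℝ}
    {S : Finset ι} {j k : ι} (hS : IsFeasible dk f τ S) (hk : k ∈ S) (hj : dk j = 1)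
    (hk1 : 1 ≤ dk k) (hτj : f 1 S.card ≤ τ j) :
    IsFeasible dk f τ (insert j (S.erase k)) := by
  have hcount := card_filter_insert_erase_le (j := j) hk (hj.le.trans hk1)
  intro i hi
  rcases mem_insert.mp hi with rfl | hi
  · calc latency dk f _ i = f 1 ((insert i (S.erase k)).filter (fun i => 1 ≤ dk i)).card :=
          latency_of_eq_one hj
      _ ≤ f 1 S.card := hf 1 ((hcount 1).trans (card_filter_le _ _))
      _ ≤ τ i := hτj
  · exact (latency_mono hf hcount i).trans (hS i (mem_of_mem_erase hi))

theorem IsFeasible.filter_eq_one_subset {τ : ι → ℝ} {K S : Finset ι} (hSK : S ⊆ K)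
    (hpos : ∀ i ∈ S, 1 ≤ dk i) (hS : IsFeasible dk f τ S) :
    S.filter (fun k => dk k = 1) ⊆ K.filter (fun k => dk k = 1 ∧ f 1 S.card ≤ τ k) := by
  intro x hx
  obtain ⟨hxS, hx1⟩ := mem_filter.mp hx
  have hlat := hS x hxS
  rw [latency_of_eq_one hx1, filter_true_of_mem hpos] at hlat
  exact mem_filter.mpr ⟨hSK hxS, hx1, hlat⟩

theorem IsFeasible.exists_card_filter_eq_succ (hf : ∀ d, Monotone (f d)) {τ : ι → ℝ}
    {K S : Finset ι} {n : ℕ} (hpos : ∀ i ∈ K, 1 ≤ dk i) (hSK : S ⊆ K) (hSn : S.card = n)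
    (hS : IsFeasible dk f τ S)
    (hF : (S.filter (fun k => dk k = 1)).card <
      (K.filter (fun k => dk k = 1 ∧ f 1 n ≤ τ k)).card)
    (hn : (S.filter (fun k => dk k = 1)).card < n) :
    ∃ T ⊆ K, T.card = n ∧ IsFeasible dk f τ T ∧
      (T.filter (fun k => dk k = 1)).card = (S.filter (fun k => dk k = 1)).card + 1 := by
  classical
  obtain ⟨j, hjF, hjS₁⟩ := exists_mem_notMem_of_card_lt_card hF
  obtain ⟨hjK, hj1, hτj⟩ := mem_filter.mp hjF
  obtain ⟨k, hkS, hkS₁⟩ := exists_mem_notMem_of_card_lt_card (hSn ▸ hn)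
  have hjS : j ∉ S := fun h => hjS₁ (mem_filter.mpr ⟨h, hj1⟩)
  refine ⟨insert j (S.erase k), insert_subset hjK ((erase_subset _ _).trans hSK), ?_,
    hS.insert_erase hf hkS hj1 (hpos k (hSK hkS)) (hSn ▸ hτj), ?_⟩
  · rw [card_insert_of_notMem (fun h => hjS (mem_of_mem_erase h)), card_erase_add_one hkS, hSn]
  · rw [filter_insert, if_pos hj1, filter_erase, erase_eq_of_notMem hkS₁,
      card_insert_of_notMem hjS₁]

theorem IsFeasible.exists_card_filter_eq (hf : ∀ d, Monotone (f d)) {τ : ι → ℝ}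
    {K S : Finset ι} {n m : ℕ} (hpos : ∀ i ∈ K, 1 ≤ dk i) (hSK : S ⊆ K) (hSn : S.card = n)
    (hS : IsFeasible dk f τ S) (hm : (S.filter (fun k => dk k = 1)).card ≤ m)
    (hmF : m ≤ (K.filter (fun k => dk k = 1 ∧ f 1 n ≤ τ k)).card)
    (hFn : (K.filter (fun k => dk k = 1 ∧ f 1 n ≤ τ k)).card < n) :
    ∃ T ⊆ K, T.card = n ∧ IsFeasible dk f τ T ∧ (T.filter (fun k => dk k = 1)).card = m := by
  induction m, hm using Nat.le_induction with
  | base => exact ⟨S, hSK, hSn, hS, rfl⟩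
  | succ m _ ih =>
    obtain ⟨T, hTK, hTn, hT, rfl⟩ := ih (by omega)
    exact hT.exists_card_filter_eq_succ hf hpos hTK hTn (by omega) (by omega)

end GreedyUserSelection

theorem optimal_greedy_user_selection_general {ι : Type*} (K : Finset ι) (D : ℕ) (dk : ι → ℕ)
    (hdk : ∀ k ∈ K, 1 ≤ dk k ∧ dk k ≤ D) (τ : ι → ℝ) (f : ℕ → ℕ → ℝ)
    (hf : ∀ d, Monotone (f d)) (n : ℕ)
    (F₁ : Finset ι) (hF₁ : F₁ = K.filter (fun k => dk k = 1 ∧ f 1 n ≤ τ k))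
    (hF₁lt : F₁.card < n) (ndag : ℕ) (hdag : ndag ≤ F₁.card)
    (hno : ¬ ∃ S ⊆ K, S.card = n ∧
        (∀ k ∈ S, (∑ d ∈ Finset.Icc 1 (dk k),
            f d (S.filter (fun j => d ≤ dk j)).card) ≤ τ k) ∧
        (S.filter (fun k => dk k = 1)).card = ndag) :
    ¬ ∃ S ⊆ K, S.card = n ∧
        (∀ k ∈ S, (∑ d ∈ Finset.Icc 1 (dk k),
            f d (S.filter (fun j => d ≤ dk j)).card) ≤ τ k) ∧
        (S.filter (fun k => dk k = 1)).card < ndag := by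
  rintro ⟨S, hSK, hSn, hS, hlt⟩
  subst hF₁
  exact hno (GreedyUserSelection.IsFeasible.exists_card_filter_eq hf (fun k hk => (hdk k hk).1)
    hSK hSn hS hlt.le hdag hF₁lt)

/-- Optimal greedy user selection (Lemma 1). In the large-bandwidth feasibility problem
P5 — find `S ⊆ K` with `|S| = n` such that `Σ_{d=1}^{d_k} f_d(n_d) ≤ τ̃_k` for all
`k ∈ S`, where `n_d = Σ_{k∈S} 𝟙(d_k ≥ d)` — let `F₁ = {k ∈ K₁ : f_1(n) ≤ τ̃_k}` with
`|F₁| < n`. If no solution exists with `|S₁| = n†` for some `n† ≤ |F₁|`, then no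
solution exists with `0 ≤ |S₁| < n†`, where `S₁ = {k ∈ S : d_k = 1}`. -/
theorem optimal_greedy_user_selection {ι : Type*} (K : Finset ι) (D : ℕ) (dk : ι → ℕ)
    (hdk : ∀ k ∈ K, 1 ≤ dk k ∧ dk k ≤ D) (τ : ι → ℝ) (f : ℕ → ℕ → ℝ)
    (hf0 : ∀ d m, 0 ≤ f d m) (hf : ∀ d, Monotone (f d)) (n : ℕ)
    (F₁ : Finset ι) (hF₁ : F₁ = K.filter (fun k => dk k = 1 ∧ f 1 n ≤ τ k))
    (hF₁lt : F₁.card < n) (ndag : ℕ) (hdag : ndag ≤ F₁.card)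
    (hno : ¬ ∃ S ⊆ K, S.card = n ∧
        (∀ k ∈ S, (∑ d ∈ Finset.Icc 1 (dk k),
            f d (S.filter (fun j => d ≤ dk j)).card) ≤ τ k) ∧
        (S.filter (fun k => dk k = 1)).card = ndag) :
    ¬ ∃ S ⊆ K, S.card = n ∧
        (∀ k ∈ S, (∑ d ∈ Finset.Icc 1 (dk k),
            f d (S.filter (fun j => d ≤ dk j)).card) ≤ τ k) ∧
        (S.filter (fun k => dk k = 1)).card < ndag :=
  optimal_greedy_user_selection_general K D dk hdk τ f hf n F₁ hF₁ hF₁lt ndag hdag hno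
end

section
/- Exchange argument for greedy selection: suppose {S_1,...,S_D} is a solution to P5, r ∈ F_1 \ S_1, and s ∈ S_m for some m ≥ 2 with S_m ≠ ∅. Then {S_1 ∪ {r}, S_2, ..., S_m \ {s}, ..., S_D} is also a solution to P5, with the resulting block-wise batch sizes n'_d satisfying n'_d ≤ n_d for all d. -/
/-!
Swapping `s` for `r` removes one job from the batch of every block `d ≤ dk s` and adds one
only to blocks `d ≤ dk r = 1`, where `s` was also counted; so no batch size grows, and by
monotonicity of the `f d` every remaining job stays within its deadline. The newcomer `r`
runs only block 1, whose batch is the whole selection of size `n`, and `f 1 n ≤ τ r`.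
-/

open Finset

namespace Finset

variable {ι : Type*} [DecidableEq ι] {S : Finset ι} {r s : ι}

theorem card_insert_erase_of_notMem_of_mem (hr : r ∉ S) (hs : s ∈ S) :
    (insert r (S.erase s)).card = S.card := by
  rw [card_insert_of_notMem fun h => hr (mem_of_mem_erase h), card_erase_add_one hs]

theorem card_filter_insert_erase_le (p : ι → Prop) [DecidablePred p] (hs : s ∈ S)
    (hps : p r → p s) : ((insert r (S.erase s)).filter p).card ≤ (S.filter p).card := by
  rw [filter_insert, filter_erase]
  split_ifs with hpr
  · exact (card_insert_le _ _).trans_eq (card_erase_add_one (mem_filter.2 ⟨hs, hps hpr⟩))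
  · exact card_le_card (erase_subset _ _)

end Finset

theorem exchange_argument_general {ι : Type*} [DecidableEq ι] (K : Finset ι) (D : ℕ)
    (dk : ι → ℕ) (hdk : ∀ k ∈ K, 1 ≤ dk k ∧ dk k ≤ D) (τ : ι → ℝ) (f : ℕ → ℕ → ℝ)
    (hf : ∀ d, Monotone (f d)) (n : ℕ)
    (S : Finset ι) (hSK : S ⊆ K) (hScard : S.card = n)
    (hSfeas : ∀ k ∈ S, (∑ d ∈ Finset.Icc 1 (dk k),
        f d (S.filter (fun j => d ≤ dk j)).card) ≤ τ k)
    (r : ι) (hrK : r ∈ K) (hr1 : dk r = 1) (hrτ : f 1 n ≤ τ r) (hrS : r ∉ S)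
    (s : ι) (hsS : s ∈ S) :
    ((insert r (S.erase s)) ⊆ K ∧ (insert r (S.erase s)).card = n ∧
      (∀ k ∈ insert r (S.erase s), (∑ d ∈ Finset.Icc 1 (dk k),
          f d ((insert r (S.erase s)).filter (fun j => d ≤ dk j)).card) ≤ τ k)) ∧
      (∀ d : ℕ, ((insert r (S.erase s)).filter (fun j => d ≤ dk j)).card ≤
          (S.filter (fun j => d ≤ dk j)).card) := by
  set S' := insert r (S.erase s)
  have hS'K : S' ⊆ K := insert_subset hrK ((erase_subset s S).trans hSK)
  have hcard : S'.card = n := (card_insert_erase_of_notMem_of_mem hrS hsS).trans hScard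
  have hle : ∀ d, (S'.filter (d ≤ dk ·)).card ≤ (S.filter (d ≤ dk ·)).card := fun d =>
    card_filter_insert_erase_le _ hsS fun hd => hd.trans (hr1.trans_le (hdk s (hSK hsS)).1)
  refine ⟨⟨hS'K, hcard, fun k hk => ?_⟩, hle⟩
  rcases mem_insert.1 hk with rfl | hk
  · have hall : S'.filter (1 ≤ dk ·) = S' := filter_true_of_mem fun j hj => (hdk j (hS'K hj)).1
    simpa [hr1, hall, hcard] using hrτ
  · exact (sum_le_sum fun d _ => hf d (hle d)).trans (hSfeas k (mem_of_mem_erase hk))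

/-- Exchange argument for greedy selection: if `S` solves P5, `r ∈ F₁ \ S₁` and
`s ∈ S_m` for some `m ≥ 2`, then `S' = (S \ {s}) ∪ {r}` also solves P5, and the
resulting block-wise batch sizes satisfy `n'_d ≤ n_d` for all `d`. -/
theorem exchange_argument {ι : Type*} [DecidableEq ι] (K : Finset ι) (D : ℕ)
    (dk : ι → ℕ) (hdk : ∀ k ∈ K, 1 ≤ dk k ∧ dk k ≤ D) (τ : ι → ℝ) (f : ℕ → ℕ → ℝ)
    (hf0 : ∀ d m, 0 ≤ f d m) (hf : ∀ d, Monotone (f d)) (n : ℕ)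
    (S : Finset ι) (hSK : S ⊆ K) (hScard : S.card = n)
    (hSfeas : ∀ k ∈ S, (∑ d ∈ Finset.Icc 1 (dk k),
        f d (S.filter (fun j => d ≤ dk j)).card) ≤ τ k)
    (r : ι) (hrK : r ∈ K) (hr1 : dk r = 1) (hrτ : f 1 n ≤ τ r) (hrS : r ∉ S)
    (s : ι) (hsS : s ∈ S) (m : ℕ) (hm : 2 ≤ m) (hsm : dk s = m) :
    ((insert r (S.erase s)) ⊆ K ∧ (insert r (S.erase s)).card = n ∧
      (∀ k ∈ insert r (S.erase s), (∑ d ∈ Finset.Icc 1 (dk k),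
          f d ((insert r (S.erase s)).filter (fun j => d ≤ dk j)).card) ≤ τ k)) ∧
      (∀ d : ℕ, ((insert r (S.erase s)).filter (fun j => d ≤ dk j)).card ≤
          (S.filter (fun j => d ≤ dk j)).card) :=
  exchange_argument_general K D dk hdk τ f hf n S hSK hScard hSfeas r hrK hr1 hrτ hrS s hsS
end

section
/- Nested feasibility propagation (Proposition 2): in the recursive structure of P5, if the feasible subset at level a satisfies |F_a| < n' and we greedily set S_a = F_a, then the feasibility of the reduced sub-problem P5(a+1) implies the feasibility of P5(a), and the infeasibility of P5(a+1) implies the infeasibility of P5(a). -/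
open Finset

/-- Nested feasibility propagation (Proposition 2): if the feasible subset at level `a`
satisfies `|F_a| < n'` and we greedily set `S_a = F_a`, then the reduced sub-problem
P5(a+1) (with `n'' = n' - |F_a|` tasks and remaining budgets `τ̃'_k - f_a(n')`) is
feasible if and only if P5(a) is feasible. -/
theorem nested_feasibility_propagation {ι : Type*} (K : Finset ι) (D : ℕ) (dk : ι → ℕ)
    (hdk : ∀ k ∈ K, 1 ≤ dk k ∧ dk k ≤ D) (τ' : ι → ℝ) (f : ℕ → ℕ → ℝ)
    (hf0 : ∀ d m, 0 ≤ f d m) (hf : ∀ d, Monotone (f d))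
    (a : ℕ) (ha1 : 1 ≤ a) (haD : a < D) (n' : ℕ)
    (Fa : Finset ι) (hFa : Fa = K.filter (fun k => dk k = a ∧ f a n' ≤ τ' k))
    (hFalt : Fa.card < n') :
    (∃ S ⊆ K.filter (fun k => a + 1 ≤ dk k), S.card = n' - Fa.card ∧
        ∀ k ∈ S, (∑ d ∈ Finset.Icc (a + 1) (dk k),
            f d (S.filter (fun j => d ≤ dk j)).card) ≤ τ' k - f a n') ↔
      (∃ S ⊆ K.filter (fun k => a ≤ dk k), S.card = n' ∧
        ∀ k ∈ S, (∑ d ∈ Finset.Icc a (dk k),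
            f d (S.filter (fun j => d ≤ dk j)).card) ≤ τ' k) := by

  classical
  constructor
  · rintro ⟨S', hS'sub, hS'card, hS'⟩
    have hS'dk : ∀ k ∈ S', a + 1 ≤ dk k := fun k hk =>
      (Finset.mem_filter.mp (hS'sub hk)).2
    have hFadk : ∀ k ∈ Fa, dk k = a := fun k hk => by
      rw [hFa] at hk; exact (Finset.mem_filter.mp hk).2.1
    have hdisj : Disjoint Fa S' := by
      rw [Finset.disjoint_left]
      intro k hk hk'
      have := hFadk k hk
      have := hS'dk k hk'
      omega
    refine ⟨Fa ∪ S', ?_, ?_, ?_⟩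
    · intro k hk
      rcases Finset.mem_union.mp hk with hk | hk
      · rw [hFa] at hk
        rcases Finset.mem_filter.mp hk with ⟨hkK, hka, _⟩
        exact Finset.mem_filter.mpr ⟨hkK, by omega⟩
      · rcases Finset.mem_filter.mp (hS'sub hk) with ⟨hkK, hka⟩
        exact Finset.mem_filter.mpr ⟨hkK, by omega⟩
    · rw [Finset.card_union_of_disjoint hdisj, hS'card]; omega
    · have hall : ∀ j ∈ Fa ∪ S', a ≤ dk j := by
        intro j hj
        rcases Finset.mem_union.mp hj with hj | hj
        · exact (hFadk j hj).ge
        · have := hS'dk j hj; omega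
      have hfilA : (Fa ∪ S').filter (fun j => a ≤ dk j) = Fa ∪ S' :=
        Finset.filter_eq_self.mpr hall
      have hcard : ((Fa ∪ S').filter (fun j => a ≤ dk j)).card = n' := by
        rw [hfilA, Finset.card_union_of_disjoint hdisj, hS'card]; omega
      have hfilD : ∀ d, a + 1 ≤ d →
          (Fa ∪ S').filter (fun j => d ≤ dk j) = S'.filter (fun j => d ≤ dk j) := by
        intro d hd
        rw [Finset.filter_union]
        have : Fa.filter (fun j => d ≤ dk j) = ∅ := by
          apply Finset.filter_eq_empty_iff.mpr
          intro j hj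
          have := hFadk j hj; omega
        rw [this, Finset.empty_union]
      intro k hk
      rcases Finset.mem_union.mp hk with hk | hk
      · have hka := hFadk k hk
        rw [hFa] at hk
        have hτ := (Finset.mem_filter.mp hk).2.2
        rw [hka, Finset.Icc_self, Finset.sum_singleton, hcard]
        exact hτ
      · have hka := hS'dk k hk
        have hsplit : Finset.Icc a (dk k) = (Finset.Ioc a (dk k)).cons a (by simp) :=
          Finset.Icc_eq_cons_Ioc (by omega)
        rw [hsplit, Finset.sum_cons, hcard, ← Finset.Icc_add_one_left_eq_Ioc]
        have hsum : (∑ d ∈ Finset.Icc (a + 1) (dk k),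
            f d (((Fa ∪ S').filter (fun j => d ≤ dk j)).card)) =
            ∑ d ∈ Finset.Icc (a + 1) (dk k),
            f d ((S'.filter (fun j => d ≤ dk j)).card) := by
          apply Finset.sum_congr rfl
          intro d hd
          rw [hfilD d (Finset.mem_Icc.mp hd).1]
        rw [hsum]
        have := hS' k hk
        linarith
  · rintro ⟨S, hSsub, hScard, hS⟩
    have hSdk : ∀ k ∈ S, a ≤ dk k := fun k hk =>
      (Finset.mem_filter.mp (hSsub hk)).2
    have hfilS : S.filter (fun j => a ≤ dk j) = S := Finset.filter_eq_self.mpr hSdk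
    set T := S.filter (fun k => a + 1 ≤ dk k) with hT
    have hnegsub : S.filter (fun k => ¬ (a + 1 ≤ dk k)) ⊆ Fa := by
      intro k hk
      rcases Finset.mem_filter.mp hk with ⟨hkS, hkd⟩
      have hka : dk k = a := by have := hSdk k hkS; omega
      have := hS k hkS
      rw [hka, Finset.Icc_self, Finset.sum_singleton, hfilS, hScard] at this
      rw [hFa]
      exact Finset.mem_filter.mpr ⟨(Finset.mem_filter.mp (hSsub hkS)).1, hka, this⟩
    have hTcard : n' - Fa.card ≤ T.card := by
      have h1 : T.card + (S.filter (fun k => ¬ (a + 1 ≤ dk k))).card = n' := by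
        rw [hT, ← hScard]
        exact Finset.card_filter_add_card_filter_not (p := fun k => a + 1 ≤ dk k)
      have h2 := Finset.card_le_card hnegsub
      omega
    obtain ⟨S', hS'T, hS'card⟩ := Finset.exists_subset_card_eq hTcard
    have hS'S : S' ⊆ S := hS'T.trans (Finset.filter_subset _ _)
    refine ⟨S', ?_, hS'card, ?_⟩
    · intro k hk
      rcases Finset.mem_filter.mp (hS'T hk) with ⟨hkS, hkd⟩
      exact Finset.mem_filter.mpr ⟨(Finset.mem_filter.mp (hSsub hkS)).1, hkd⟩
    · intro k hk
      have hkT := hS'T hk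
      rcases Finset.mem_filter.mp hkT with ⟨hkS, hkd⟩
      have hcon := hS k hkS
      have hsplit : Finset.Icc a (dk k) = (Finset.Ioc a (dk k)).cons a (by simp) :=
        Finset.Icc_eq_cons_Ioc (by omega)
      rw [hsplit, Finset.sum_cons, hfilS, hScard, ← Finset.Icc_add_one_left_eq_Ioc] at hcon
      have hle : (∑ d ∈ Finset.Icc (a + 1) (dk k),
          f d ((S'.filter (fun j => d ≤ dk j)).card)) ≤
          ∑ d ∈ Finset.Icc (a + 1) (dk k),
          f d ((S.filter (fun j => d ≤ dk j)).card) := by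
        apply Finset.sum_le_sum
        intro d _
        exact hf d (Finset.card_le_card (Finset.filter_subset_filter _ hS'S))
      linarith
end

section
/- The resource allocation problem P2 (maximize |S| over S ⊆ K subject to Σ_{k∈S} ρ_k ≤ 1 and Σ_{d=1}^{d_k} f_d(n_d) ≤ τ̃_k for all k ∈ S, with n_d = Σ_{k∈S} 𝟙(d_k ≥ d)) contains the cardinality-maximizing two-dimensional knapsack problem as a special case: for any instance with item weights a_k, volumes b_k (sorted so b_1 ≤ ... ≤ b_K) and capacities C_1, C_2, setting ρ_k = a_k/C_1, d_k = k, D = K, τ̃_k = C_2, f_1(n) = b_1·n and f_d(n) = (b_d − b_{d−1})·n for d ≥ 2 yields an instance of P2 whose feasible sets coincide with those of the knapsack instance. -/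
open Finset

lemma tele_sum (b : ℕ → ℝ) : ∀ m, 1 ≤ m →
    ∑ d ∈ Finset.Icc 1 m, (if d = 1 then b 1 else b d - b (d - 1)) = b m := by
  intro m hm
  induction m with
  | zero => omega
  | succ n ih =>
    rcases Nat.eq_or_lt_of_le hm with h | h
    · simp [← h]
    · have hn : 1 ≤ n := by omega
      rw [Finset.sum_Icc_succ_top (by omega), ih hn]
      have : ¬ (n + 1 = 1) := by omega
      simp [this, show n ≠ 0 by omega]

/-- Knapsack reduction (Proposition 1): under the parameter mapping `ρ_k = a_k / C₁`,
`d_k = k`, `D = K`, `τ̃_k = C₂`, `f_1(n) = b_1·n`, `f_d(n) = (b_d − b_{d−1})·n`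
for `d ≥ 2`, a set `S ⊆ {1,…,K}` is feasible for the cardinality-maximizing
two-dimensional knapsack problem iff it is feasible for problem P2. -/
theorem knapsack_reduction (K : ℕ) (a b : ℕ → ℝ) (C₁ C₂ : ℝ) (hC₁ : 0 < C₁) (hC₂ : 0 ≤ C₂)
    (ha : ∀ k ∈ Finset.Icc 1 K, 0 ≤ a k) (hb1 : 0 ≤ b 1)
    (hbmono : ∀ i j : ℕ, 1 ≤ i → i ≤ j → j ≤ K → b i ≤ b j)
    (f : ℕ → ℕ → ℝ) (hfdef : ∀ d m : ℕ, f d m = (if d = 1 then b 1 else b d - b (d - 1)) * m) :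
    ∀ S ⊆ Finset.Icc 1 K,
      ((∑ k ∈ S, a k) ≤ C₁ ∧ (∑ k ∈ S, b k) ≤ C₂) ↔
        ((∑ k ∈ S, a k / C₁) ≤ 1 ∧
          ∀ k ∈ S, (∑ d ∈ Finset.Icc 1 k,
              f d (S.filter (fun j => d ≤ j)).card) ≤ C₂) := by
  intro S hS
  have hmem : ∀ j ∈ S, 1 ≤ j ∧ j ≤ K := by
    intro j hj
    have := hS hj
    simp only [Finset.mem_Icc] at this
    exact this
  -- first constraint equivalence
  have h1 : (∑ k ∈ S, a k / C₁) ≤ 1 ↔ (∑ k ∈ S, a k) ≤ C₁ := by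
    rw [← Finset.sum_div, div_le_one hC₁]
  -- key identity
  have key : ∀ k, 1 ≤ k → (∑ d ∈ Finset.Icc 1 k,
      f d (S.filter (fun j => d ≤ j)).card) = ∑ j ∈ S, b (min j k) := by
    intro k hk
    have : ∀ d, (f d (S.filter (fun j => d ≤ j)).card)
        = ∑ j ∈ S, (if d ≤ j then (if d = 1 then b 1 else b d - b (d - 1)) else 0) := by
      intro d
      rw [hfdef, Finset.card_filter]
      push_cast
      rw [Finset.mul_sum]
      congr 1; ext j
      by_cases h : d ≤ j <;> simp [h]
    simp_rw [this]
    rw [Finset.sum_comm]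
    apply Finset.sum_congr rfl
    intro j hj
    obtain ⟨hj1, hjK⟩ := hmem j hj
    have : ∀ d ∈ Finset.Icc 1 k,
        (if d ≤ j then (if d = 1 then b 1 else b d - b (d - 1)) else 0)
        = if d ∈ Finset.Icc 1 (min j k) then (if d = 1 then b 1 else b d - b (d - 1)) else 0 := by
      intro d hd
      simp only [Finset.mem_Icc] at hd ⊢
      by_cases h : d ≤ j <;> simp [h, hd.1, hd.2] <;> omega
    rw [Finset.sum_congr rfl this, ← Finset.sum_filter,
      Finset.filter_mem_eq_inter,
      Finset.inter_eq_right.mpr (Finset.Icc_subset_Icc_right (min_le_right j k))]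
    exact tele_sum b _ (le_min hj1 hk)
  constructor
  · rintro ⟨hA, hB⟩
    refine ⟨h1.mpr hA, ?_⟩
    intro k hk
    obtain ⟨hk1, hkK⟩ := hmem k hk
    rw [key k hk1]
    refine le_trans (Finset.sum_le_sum ?_) hB
    intro j hj
    obtain ⟨hj1, hjK⟩ := hmem j hj
    exact hbmono (min j k) j (le_min hj1 hk1) (min_le_left _ _) hjK
  · rintro ⟨hA, hB⟩
    refine ⟨h1.mp hA, ?_⟩
    rcases S.eq_empty_or_nonempty with rfl | hne
    · simpa using hC₂
    · set k := S.max' hne with hkdef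
      have hkS : k ∈ S := S.max'_mem hne
      obtain ⟨hk1, _⟩ := hmem k hkS
      have := hB k hkS
      rw [key k hk1] at this
      refine le_trans (le_of_eq ?_) this
      apply Finset.sum_congr rfl
      intro j hj
      have : min j k = j := min_eq_left (S.le_max' j hj)
      rw [this]
end
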